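/- Let K be an N×N symmetric matrix with strictly positive entries, M = diag(m_1,...,m_N) with m_i > 0, and Λ = diag(λ_1,...,λ_N) with λ_i > 0 such that Q = Λ K M Λ satisfies Q1 = 1. Then the matrix Q' = √M Λ K Λ √M is symmetric and satisfies xᵀ(I - Q')x ≥ 0 for all x ∈ ℝ^N; hence all eigenvalues of Q are at most 1. -/
import Mathlib


open Matrix

/-- If `Q = Λ K M Λ` (with `K` symmetric positive, `M`, `Λ` positive diagonal)
is row-stochastic, then `Q' = √M Λ K Λ √M` is symmetric with `I - Q'` PSD;
hence every eigenvalue of `Q` is at most `1`. -/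
theorem sinkhorn_eigenvalues_le_one {N : ℕ}
    (K : Matrix (Fin N) (Fin N) ℝ) (hK : K.IsSymm) (hKpos : ∀ i j, 0 < K i j)
    (m lam : Fin N → ℝ) (hm : ∀ i, 0 < m i) (hlam : ∀ i, 0 < lam i)
    (hrow : (Matrix.diagonal lam * K * Matrix.diagonal m *
        Matrix.diagonal lam).mulVec (fun _ => 1) = fun _ => 1) :
    (Matrix.diagonal (fun i => Real.sqrt (m i)) * Matrix.diagonal lam * K *
        Matrix.diagonal lam * Matrix.diagonal (fun i => Real.sqrt (m i))).IsSymm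
    ∧ (∀ x : Fin N → ℝ,
        0 ≤ x ⬝ᵥ ((1 - (Matrix.diagonal (fun i => Real.sqrt (m i)) *
            Matrix.diagonal lam * K * Matrix.diagonal lam *
            Matrix.diagonal (fun i => Real.sqrt (m i)))).mulVec x))
    ∧ (∀ α : ℝ, (∃ x : Fin N → ℝ, x ≠ 0 ∧
          (Matrix.diagonal lam * K * Matrix.diagonal m *
            Matrix.diagonal lam).mulVec x = α • x) → α ≤ 1) := by
  set Q' : Matrix (Fin N) (Fin N) ℝ :=
    Matrix.diagonal (fun i => Real.sqrt (m i)) * Matrix.diagonal lam * K *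
      Matrix.diagonal lam * Matrix.diagonal (fun i => Real.sqrt (m i)) with hQ'def
  have hKsymm : ∀ i j, K i j = K j i := fun i j => (Matrix.IsSymm.apply hK j i)
  have hsq : ∀ i, Real.sqrt (m i) * Real.sqrt (m i) = m i :=
    fun i => Real.mul_self_sqrt (hm i).le
  have hQ' : ∀ i j, Q' i j =
      Real.sqrt (m i) * lam i * K i j * lam j * Real.sqrt (m j) := by
    intro i j
    simp [hQ'def, Matrix.diagonal_mul, Matrix.mul_diagonal]
  -- row condition entrywise
  have hrow' : ∀ i, lam i * ∑ j, K i j * (m j * lam j) = 1 := by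
    intro i
    have := congrFun hrow i
    simp only [Matrix.mulVec, dotProduct, Matrix.mul_diagonal,
      Matrix.diagonal_mul, mul_one] at this
    rw [← this, Finset.mul_sum]
    congr 1; ext j; ring
  -- symmetry
  have hsym : Q'.IsSymm := by
    ext i j
    simp only [Matrix.transpose_apply]
    rw [hQ' i j, hQ' j i, hKsymm i j]
    ring
  -- quadratic form identity
  have hquad : ∀ x : Fin N → ℝ,
      2 * (x ⬝ᵥ ((1 - Q').mulVec x)) =
        ∑ i, ∑ j, lam i * lam j * K i j *
          (Real.sqrt (m j) * x i - Real.sqrt (m i) * x j) ^ 2 := by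
    intro x
    have expand : ∀ i j, lam i * lam j * K i j *
        (Real.sqrt (m j) * x i - Real.sqrt (m i) * x j) ^ 2 =
        (lam i * (K i j * (m j * lam j))) * x i ^ 2
          + (lam j * (K j i * (m i * lam i))) * x j ^ 2
          - 2 * (x i * (Q' i j * x j)) := by
      intro i j
      rw [hQ' i j, hKsymm j i]
      linear_combination (lam i * lam j * K i j * x i ^ 2) * hsq j
        + (lam i * lam j * K i j * x j ^ 2) * hsq i
        + (2 * lam i * lam j * K i j * x i * x j) * hsq i * 0
    have e1 : ∑ i, ∑ j, (lam i * (K i j * (m j * lam j))) * x i ^ 2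
        = ∑ i, x i ^ 2 := by
      refine Finset.sum_congr rfl fun i _ => ?_
      rw [← Finset.sum_mul, ← Finset.mul_sum, hrow' i, one_mul]
    have e2 : ∑ i, ∑ j, (lam j * (K j i * (m i * lam i))) * x j ^ 2
        = ∑ i, x i ^ 2 := by
      rw [Finset.sum_comm]; exact e1
    have hS : x ⬝ᵥ ((1 - Q').mulVec x) =
        (∑ i, x i ^ 2) - ∑ i, ∑ j, x i * (Q' i j * x j) := by
      rw [Matrix.sub_mulVec, Matrix.one_mulVec, dotProduct_sub]
      congr 1
      · simp [dotProduct, sq]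
      · simp [dotProduct, Matrix.mulVec, Finset.mul_sum]
    calc 2 * (x ⬝ᵥ ((1 - Q').mulVec x))
        = (∑ i, ∑ j, (lam i * (K i j * (m j * lam j))) * x i ^ 2)
            + (∑ i, ∑ j, (lam j * (K j i * (m i * lam i))) * x j ^ 2)
            - ∑ i, ∑ j, 2 * (x i * (Q' i j * x j)) := by
          rw [hS, e1, e2]
          simp only [← Finset.mul_sum]
          ring
      _ = ∑ i, ∑ j, ((lam i * (K i j * (m j * lam j))) * x i ^ 2
            + (lam j * (K j i * (m i * lam i))) * x j ^ 2
            - 2 * (x i * (Q' i j * x j))) := by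
          simp only [Finset.sum_add_distrib, Finset.sum_sub_distrib]
      _ = ∑ i, ∑ j, lam i * lam j * K i j *
            (Real.sqrt (m j) * x i - Real.sqrt (m i) * x j) ^ 2 :=
          Finset.sum_congr rfl fun i _ =>
            Finset.sum_congr rfl fun j _ => (expand i j).symm
  have hpsd : ∀ x : Fin N → ℝ, 0 ≤ x ⬝ᵥ ((1 - Q').mulVec x) := by
    intro x
    have h : 0 ≤ 2 * (x ⬝ᵥ ((1 - Q').mulVec x)) := by
      rw [hquad x]
      refine Finset.sum_nonneg fun i _ => Finset.sum_nonneg fun j _ => ?_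
      exact mul_nonneg (mul_nonneg (mul_nonneg (hlam i).le (hlam j).le)
        (hKpos i j).le) (sq_nonneg _)
    linarith
  refine ⟨hsym, hpsd, ?_⟩
  rintro α ⟨x, hx, hQx⟩
  set y : Fin N → ℝ := fun i => Real.sqrt (m i) * x i with hy
  have hQ'y : Q'.mulVec y = α • y := by
    funext i
    have hQxi := congrFun hQx i
    simp only [Matrix.mulVec, dotProduct, Matrix.mul_diagonal,
      Matrix.diagonal_mul] at hQxi ⊢
    simp only [hy, Pi.smul_apply, smul_eq_mul] at hQxi ⊢
    calc ∑ j, Q' i j * (Real.sqrt (m j) * x j)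
        = Real.sqrt (m i) * ∑ j, lam i * K i j * m j * lam j * x j := by
          rw [Finset.mul_sum]
          refine Finset.sum_congr rfl fun j _ => ?_
          rw [hQ' i j]
          linear_combination (Real.sqrt (m i) * lam i * K i j * lam j * x j) * hsq j
      _ = Real.sqrt (m i) * (α * x i) := by rw [hQxi]
      _ = α * (Real.sqrt (m i) * x i) := by ring
  have hyne : y ≠ 0 := by
    intro h
    apply hx
    funext i
    have := congrFun h i
    simp only [hy, Pi.zero_apply] at this ⊢
    have hs : Real.sqrt (m i) ≠ 0 := ne_of_gt (Real.sqrt_pos.mpr (hm i))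
    exact (mul_eq_zero.mp this).resolve_left hs
  have hyy : 0 < y ⬝ᵥ y := by
    have h0 : y ⬝ᵥ y = ∑ i, y i ^ 2 := by
      simp [dotProduct, sq]
    rw [h0]
    obtain ⟨i, hi⟩ := Function.ne_iff.mp hyne
    exact Finset.sum_pos' (fun j _ => sq_nonneg _)
      ⟨i, Finset.mem_univ i,
        lt_of_le_of_ne (sq_nonneg _) (Ne.symm (pow_ne_zero 2 hi))⟩
  have hdot := hpsd y
  have heq : y ⬝ᵥ ((1 - Q').mulVec y) = (1 - α) * (y ⬝ᵥ y) := by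
    rw [Matrix.sub_mulVec, Matrix.one_mulVec, hQ'y, dotProduct_sub,
      dotProduct_smul, smul_eq_mul]
    ring
  rw [heq] at hdot
  nlinarith
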